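/- arXiv:0904.2306 — 3 statements merged into one kernel-verified Lean document; each statement's English description precedes it below -/
import Mathlib

section
/- Let G(V,E) be a finite simple directed graph in which every vertex has positive indegree and let k be a positive integer. Then there exists a set S ⊆ V with c(S, G, φ_{k/(k+1)}) = V and |S| ≤ (k/(k+1))·|V|. -/
/-- The set of in-neighbors of `v` in the directed graph with adjacency
relation `A` (`A u v` means there is an edge from `u` to `v`). -/
def inNbr {V : Type*} (A : V → V → Prop) (v : V) : Set V := {u | A u v}

/-- `dClosure A ok S` is the least superset of `S` closed under the coloring
rule: a vertex `v` gets colored white as soon as the number `n` of its white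
in-neighbors satisfies the threshold condition `ok v n`. -/
def dClosure {V : Type*} (A : V → V → Prop) (ok : V → ℕ → Prop) (S : Set V) : Set V :=
  ⋂₀ {T : Set V | S ⊆ T ∧ ∀ v, ok v ((inNbr A v ∩ T).ncard) → v ∈ T}

/-- The threshold rule `φ_{k/(k+1)}`: `v` is colored white when at least
`(k/(k+1)) · deg^in(v)` of its in-neighbors are white,
i.e. `k · deg^in(v) ≤ (k+1) · n`. -/
def fracOk {V : Type*} (A : V → V → Prop) (k : ℕ) (v : V) (n : ℕ) : Prop :=
  k * (inNbr A v).ncard ≤ (k + 1) * n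

/-!
Process the vertices in a uniformly random order and seed exactly those vertices that have fewer
than `k/(k+1)` of their in-neighbours before them; every other vertex then turns white when its
turn comes. As there are no loops, the position of `v` among itself and its `d` in-neighbours is
uniform on `{0, …, d}`, so `v` is seeded with probability at most `k/(k+1)`, and some order needs
at most `k|V|/(k+1)` seeds.
-/

open Finset

section Rank

variable {V β : Type*} [LinearOrder β] {f : V → β} {P : Finset V}

def rankIn (f : V → β) (P : Finset V) (x : V) : ℕ := #{u ∈ P | f u < f x}

lemma rankIn_lt_card {x : V} (hx : x ∈ P) : rankIn f P x < #P :=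
  card_lt_card <| filter_ssubset.2 ⟨x, hx, lt_irrefl _⟩

lemma rankIn_lt_rankIn {u w : V} (hu : u ∈ P) (h : f u < f w) : rankIn f P u < rankIn f P w :=
  card_lt_card <| (ssubset_iff_of_subset fun _ hz ↦ by
      simp only [mem_filter] at hz ⊢; exact ⟨hz.1, hz.2.trans h⟩).2
    ⟨u, by simp [hu, h], by simp⟩

lemma rankIn_injOn (hf : Function.Injective f) : Set.InjOn (rankIn f P) P := by
  intro u hu w hw huw
  by_contra hne
  rcases lt_or_gt_of_ne (hf.ne hne) with h | h
  · exact (rankIn_lt_rankIn hu h).ne huw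
  · exact (rankIn_lt_rankIn hw h).ne' huw

lemma image_rankIn (hf : Function.Injective f) : P.image (rankIn f P) = range #P :=
  eq_of_subset_of_card_le (fun _ hr ↦ by
      obtain ⟨x, hx, rfl⟩ := mem_image.1 hr; exact mem_range.2 (rankIn_lt_card hx))
    (by rw [card_range, card_image_of_injOn (rankIn_injOn hf)])

lemma exists_rankIn_eq (hf : Function.Injective f) {r : ℕ} (hr : r < #P) :
    ∃ w ∈ P, rankIn f P w = r :=
  mem_image.1 <| (image_rankIn hf).symm ▸ mem_range.2 hr

lemma rankIn_comp_perm {σ : Equiv.Perm V} (hσ : ∀ x, σ x ∈ P ↔ x ∈ P) (x : V) :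
    rankIn (f ∘ σ) P x = rankIn f P (σ x) :=
  card_nbij' σ σ.symm (fun u hu ↦ by simp_all) (fun w hw ↦ by simp_all [← hσ (σ.symm w)])
    (fun u _ ↦ by simp) (fun w _ ↦ by simp)

end Rank

section RandomOrder

variable {V β : Type*} [Fintype V] [DecidableEq V] [Fintype β] [LinearOrder β]
  {P : Finset V} {v : V}

/-- Swapping `v` with the vertex of rank `r'` moves `v` to rank `r'`; the swapped vertex, which
takes over the old rank of `v`, determines the swap, so this map is injective. -/
lemma card_rankIn_eq_le (hv : v ∈ P) (r : ℕ) {r' : ℕ} (hr' : r' < #P) :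
    #{f : V ≃ β | rankIn f P v = r} ≤ #{f : V ≃ β | rankIn f P v = r'} := by
  choose w hwP hw using fun f : V ≃ β ↦ exists_rankIn_eq (P := P) f.injective hr'
  have hswap (f : V ≃ β) (x : V) : Equiv.swap v (w f) x ∈ P ↔ x ∈ P := by
    rw [Equiv.swap_apply_def]; split_ifs <;> simp_all
  have hrank (f : V ≃ β) (x : V) :
      rankIn ((Equiv.swap v (w f)).trans f) P x = rankIn f P (Equiv.swap v (w f) x) :=
    rankIn_comp_perm (hswap f) x
  refine card_le_card_of_injOn (fun f ↦ (Equiv.swap v (w f)).trans f) (fun f _ ↦ ?_) ?_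
  · simp only [coe_filter, mem_univ, true_and, Set.mem_ofPred_eq, hrank, Equiv.swap_apply_left,
      hw]
  · intro f hf g hg hfg
    simp only [coe_filter, mem_univ, true_and, Set.mem_ofPred_eq] at hf hg hfg
    have hwf : rankIn ((Equiv.swap v (w g)).trans g) P (w f) = r := by
      rw [← hfg, hrank, Equiv.swap_apply_right, hf]
    have hwg : rankIn ((Equiv.swap v (w g)).trans g) P (w g) = r := by
      rw [hrank, Equiv.swap_apply_right, hg]
    have hwfg : w f = w g :=
      rankIn_injOn (Equiv.injective _) (hwP f) (hwP g) (hwf.trans hwg.symm)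
    rw [hwfg] at hfg
    simpa [← Equiv.trans_assoc, Equiv.swap_swap] using
      congrArg ((Equiv.swap v (w g)).trans ·) hfg

lemma card_filter_rankIn_mul (hv : v ∈ P) (p : ℕ → Prop) [DecidablePred p] :
    #{f : V ≃ β | p (rankIn f P v)} * #P =
      #{r ∈ range #P | p r} * Fintype.card (V ≃ β) := by
  set c := #{f : V ≃ β | rankIn f P v = 0}
  have hfiber (r : ℕ) (hr : r ∈ range #P) : #{f : V ≃ β | rankIn f P v = r} = c :=
    le_antisymm (card_rankIn_eq_le hv r (card_pos.2 ⟨v, hv⟩))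
      (card_rankIn_eq_le hv 0 (mem_range.1 hr))
  have hmaps (s : Finset (V ≃ β)) :
      Set.MapsTo (fun f : V ≃ β ↦ rankIn f P v) s (range #P) :=
    fun _ _ ↦ mem_range.2 (rankIn_lt_card hv)
  have htotal : Fintype.card (V ≃ β) = #P * c := by
    rw [← card_univ, card_eq_sum_card_fiberwise (hmaps univ), sum_congr rfl hfiber, sum_const,
      card_range, smul_eq_mul]
  have hgood : #{f : V ≃ β | p (rankIn f P v)} = #{r ∈ range #P | p r} * c := by
    rw [card_eq_sum_card_fiberwise (t := {r ∈ range #P | p r}) fun f hf ↦ ?_, sum_const_nat]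
    · intro r hr
      rw [filter_filter, ← hfiber r (mem_filter.1 hr).1]
      exact congrArg card <|
        filter_congr fun f _ ↦ ⟨And.right, fun h ↦ ⟨h ▸ (mem_filter.1 hr).2, h⟩⟩
    · exact mem_filter.2 ⟨hmaps _ hf, (mem_filter.1 hf).2⟩
  rw [htotal, hgood, mul_assoc, mul_comm c]

lemma mul_card_filter_range_lt_le (k d : ℕ) :
    (k + 1) * #{r ∈ range (d + 1) | (k + 1) * r < k * d} ≤ k * (d + 1) := by
  have hsub : {r ∈ range (d + 1) | (k + 1) * r < k * d} ⊆ range ((k * d + k) / (k + 1)) :=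
    fun r hr ↦ mem_range.2 <| (Nat.le_div_iff_mul_le k.succ_pos).2 (by
      have := (mem_filter.1 hr).2; nlinarith)
  calc (k + 1) * #{r ∈ range (d + 1) | (k + 1) * r < k * d}
      ≤ (k + 1) * ((k * d + k) / (k + 1)) :=
        Nat.mul_le_mul_left _ (by simpa using card_le_card hsub)
    _ ≤ k * (d + 1) := by rw [mul_add_one]; exact Nat.mul_div_le _ _

lemma mul_card_filter_rankIn_lt_le (hv : v ∈ P) (k : ℕ) {d : ℕ} (hP : #P = d + 1) :
    (k + 1) * #{f : V ≃ β | (k + 1) * rankIn f P v < k * d} ≤ k * Fintype.card (V ≃ β) := by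
  refine Nat.le_of_mul_le_mul_right ?_ d.succ_pos
  calc (k + 1) * #{f : V ≃ β | (k + 1) * rankIn f P v < k * d} * (d + 1)
      = (k + 1) * #{r ∈ range (d + 1) | (k + 1) * r < k * d} * Fintype.card (V ≃ β) := by
        rw [mul_assoc, ← hP, card_filter_rankIn_mul hv fun r ↦ (k + 1) * r < k * d, mul_assoc]
    _ ≤ k * (d + 1) * Fintype.card (V ≃ β) :=
        Nat.mul_le_mul_right _ (mul_card_filter_range_lt_le k d)
    _ = k * Fintype.card (V ≃ β) * (d + 1) := by ring

end RandomOrder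

lemma exists_mul_card_le_of_forall_mul_card_mem_le {ι V : Type*} [Fintype ι] [Nonempty ι]
    [Fintype V] [DecidableEq V] (S : ι → Finset V) (a b : ℕ)
    (h : ∀ v, a * #{i | v ∈ S i} ≤ b * Fintype.card ι) :
    ∃ i, a * #(S i) ≤ b * Fintype.card V := by
  have hsum : ∑ i, a * #(S i) ≤ ∑ _i : ι, b * Fintype.card V :=
    calc ∑ i, a * #(S i) = ∑ v, a * #{i | v ∈ S i} := by
          rw [← mul_sum, ← mul_sum]
          congr 1
          simpa [bipartiteAbove, bipartiteBelow] using
            sum_card_bipartiteAbove_eq_sum_card_bipartiteBelow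
              (s := univ) (t := univ) (r := fun i v ↦ v ∈ S i)
      _ ≤ ∑ _v : V, b * Fintype.card ι := sum_le_sum fun v _ ↦ h v
      _ = ∑ _i : ι, b * Fintype.card V := by simp only [sum_const, card_univ, smul_eq_mul]; ring
  obtain ⟨i, -, hi⟩ := exists_le_of_sum_le univ_nonempty hsum
  exact ⟨i, hi⟩

section Coloring

variable {V : Type*} {A : V → V → Prop} {ok : V → ℕ → Prop}

variable (A ok) in
def orderSeeds {β : Type*} [LT β] (f : V → β) : Set V :=
  {v | ¬ ok v (inNbr A v ∩ {u | f u < f v}).ncard}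

lemma subset_dClosure (S : Set V) : S ⊆ dClosure A ok S :=
  Set.subset_sInter fun _ hT ↦ hT.1

lemma mem_dClosure [Finite V] (hok : ∀ v, Monotone (ok v)) {S : Set V} {v : V}
    (h : ok v (inNbr A v ∩ dClosure A ok S).ncard) : v ∈ dClosure A ok S :=
  Set.mem_sInter.2 fun _ hT ↦ hT.2 v <| hok v (Set.ncard_le_ncard
    (Set.inter_subset_inter_right _ (Set.sInter_subset_of_mem hT))) h

lemma dClosure_orderSeeds [Finite V] {β : Type*} [Preorder β] [WellFoundedLT β]
    (hok : ∀ v, Monotone (ok v)) (f : V → β) :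
    dClosure A ok (orderSeeds A ok f) = Set.univ := by
  refine Set.eq_univ_of_forall fun v ↦ ?_
  induction v using (InvImage.wf f wellFounded_lt).induction with
  | _ v ih =>
    by_cases hv : v ∈ orderSeeds A ok f
    · exact subset_dClosure _ hv
    · exact mem_dClosure hok <| hok v (Set.ncard_le_ncard fun u hu ↦ ⟨hu.1, ih u hu.2⟩)
        (not_not.1 hv)

lemma fracOk_monotone (k : ℕ) (v : V) : Monotone (fracOk A k v) :=
  fun _ _ h hv ↦ hv.trans (Nat.mul_le_mul_left _ h)

end Coloring

lemma exists_equiv_mul_ncard_orderSeeds_le {V : Type*} [Fintype V] (A : V → V → Prop)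
    (hsimple : ∀ v, ¬ A v v) (k : ℕ) :
    ∃ f : V ≃ Fin (Fintype.card V),
      (k + 1) * (orderSeeds A (fracOk A k) f).ncard ≤ k * Fintype.card V := by
  classical
  let N (v : V) : Finset V := {u | A u v}
  let S (f : V ≃ Fin (Fintype.card V)) : Finset V :=
    {v | (k + 1) * rankIn f (insert v (N v)) v < k * #(N v)}
  have hS (f : V ≃ Fin (Fintype.card V)) : orderSeeds A (fracOk A k) f = S f := by
    ext v
    have hdeg : (inNbr A v).ncard = #(N v) := by
      rw [← Set.ncard_coe_finset]; congr 1; ext; simp [inNbr, N]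
    have hearly : (inNbr A v ∩ {u | f u < f v}).ncard = rankIn f (insert v (N v)) v := by
      rw [rankIn, filter_insert, if_neg (lt_irrefl _), ← Set.ncard_coe_finset]
      congr 1; ext; simp [inNbr, N]
    simp [orderSeeds, fracOk, S, hdeg, hearly]
  have hcount (v : V) :
      (k + 1) * #{f | v ∈ S f} ≤ k * Fintype.card (V ≃ Fin (Fintype.card V)) := by
    simpa [S] using mul_card_filter_rankIn_lt_le (β := Fin (Fintype.card V))
      (mem_insert_self v (N v)) k (card_insert_of_notMem (by simpa [N] using hsimple v))
  have : Nonempty (V ≃ Fin (Fintype.card V)) := ⟨Fintype.equivFin V⟩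
  obtain ⟨f, hf⟩ := exists_mul_card_le_of_forall_mul_card_mem_le S (k + 1) k hcount
  exact ⟨f, by rwa [hS, Set.ncard_coe_finset]⟩

theorem stmt2_general {V : Type*} [Fintype V] (A : V → V → Prop)
    (hsimple : ∀ v, ¬ A v v) (k : ℕ) :
    ∃ S : Set V, dClosure A (fracOk A k) S = Set.univ ∧
      (k + 1) * S.ncard ≤ k * Fintype.card V := by
  obtain ⟨f, hf⟩ := exists_equiv_mul_ncard_orderSeeds_le A hsimple k
  exact ⟨_, dClosure_orderSeeds (fracOk_monotone k) f, hf⟩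

/-- Theorem: every finite digraph with positive indegrees has a seed set `S`
with `c(S, G, φ_{k/(k+1)}) = V` and `|S| ≤ (k/(k+1))·|V|`
(expressed as `(k+1)·|S| ≤ k·|V|`). -/
theorem stmt2 {V : Type*} [Fintype V] (A : V → V → Prop)
    (hsimple : ∀ v, ¬ A v v) (hindeg : ∀ v : V, ∃ u, A u v)
    (k : ℕ) (hk : 0 < k) :
    ∃ S : Set V, dClosure A (fracOk A k) S = Set.univ ∧
      (k + 1) * S.ncard ≤ k * Fintype.card V :=
  stmt2_general A hsimple k
end

section
/- Let G(V,E) be a finite simple undirected connected graph, (S, V\S) a proper cut, G'(V',E') ∈ B(S) a bad connected component of G[S], v ∈ V', and v* ∈ V. Then Σ_{Ĥ(V̂,Ê)∈B(S\{v})} d(v*, V̂) ≤ (Σ_{Ĥ(V̂,Ê)∈B(S)} d(v*, V̂)) − d(v*, V'). -/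
/-- The size `e(S, V\S)` of the cut `(S, V\S)`: the number of edges of `G`
with one endpoint in `S` and the other outside `S` (each such edge is counted
once, as the ordered pair whose first coordinate lies in `S`). -/
noncomputable def cutE {V : Type*} (G : SimpleGraph V) (S : Set V) : ℕ :=
  {p : V × V | G.Adj p.1 p.2 ∧ p.1 ∈ S ∧ p.2 ∉ S}.ncard

/-- `v` is bad with respect to the cut `(S, V\S)`:
`|N(v) ∩ S| = |N(v) \ S|`. -/
def badVtx {V : Type*} (G : SimpleGraph V) (S : Set V) (v : V) : Prop :=
  (G.neighborSet v ∩ S).ncard = (G.neighborSet v \ S).ncard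

/-- The cut `(S, V\S)` is proper: no vertex has more neighbors on its own side
than on the other side. -/
def properCut {V : Type*} (G : SimpleGraph V) (S : Set V) : Prop :=
  (∀ v ∈ S, (G.neighborSet v ∩ S).ncard ≤ (G.neighborSet v \ S).ncard) ∧
  (∀ v ∉ S, (G.neighborSet v \ S).ncard ≤ (G.neighborSet v ∩ S).ncard)

/-- The vertex sets of the connected components of the induced subgraph `G[S]`,
viewed as subsets of `V`. -/
def comps {V : Type*} (G : SimpleGraph V) (S : Set V) : Set (Set V) :=
  {C | ∃ c : (G.induce S).ConnectedComponent, C = Subtype.val '' c.supp}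

/-- `badComps G S` is `B(S)`: the set of connected components of `G[S]` all of
whose vertices are bad with respect to the cut `(S, V\S)`. -/
def badComps {V : Type*} (G : SimpleGraph V) (S : Set V) : Set (Set V) :=
  {C | C ∈ comps G S ∧ ∀ v ∈ C, badVtx G S v}

/-- `dSet G v U = d(v, U) = min_{u ∈ U} d(v, u)`. -/
noncomputable def dSet {V : Type*} (G : SimpleGraph V) (v : V) (U : Set V) : ℕ :=
  sInf ((G.dist v) '' U)

/-- The potential `ψ(S, v*) = e(S, V\S)·|V|² −
[Σ_{Ĥ ∈ B(S)} d(v*, V̂) + Σ_{Ĥ ∈ B(V\S)} d(v*, V̂)]`. -/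
noncomputable def psi {V : Type*} [Fintype V] (G : SimpleGraph V) (S : Set V) (vs : V) : ℤ :=
  (cutE G S : ℤ) * (Fintype.card V : ℤ) ^ 2
    - ((∑ᶠ C ∈ badComps G S, (dSet G vs C : ℤ))
      + ∑ᶠ C ∈ badComps G Sᶜ, (dSet G vs C : ℤ))


/-!
Deleting `v` from `S` changes the two neighbour counts only at the neighbours of `v`. A
neighbour of `v` in `S` lies in `V'` and is bad, so it loses one neighbour inside and gains one
outside, and is no longer bad. Hence a component of `G[S \ {v}]` that meets `N(v)` is not bad,
and one that does not is a component of `G[S]` other than `V'`, with the same bad vertices.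
So `B(S \ {v}) = B(S) \ {V'}`, and the inequality holds with equality.
-/

open SimpleGraph Set

section

variable {V : Type*} {G : SimpleGraph V} {S T C D : Set V} {u v x : V}

theorem SimpleGraph.Reachable.mem_of_adj_closed {W : Type*} {H : SimpleGraph W} {P : Set W}
    (hP : ∀ a b, H.Adj a b → a ∈ P → b ∈ P) {a b : W} (h : H.Reachable a b) (ha : a ∈ P) :
    b ∈ P := by
  rw [reachable_iff_reflTransGen] at h
  induction h with
  | refl => exact ha
  | tail _ hbc ih => exact hP _ _ hbc ih

theorem subset_of_mem_comps (hC : C ∈ comps G S) : C ⊆ S := by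
  obtain ⟨c, rfl⟩ := hC
  rintro _ ⟨y, -, rfl⟩
  exact y.2

theorem nonempty_of_mem_comps (hC : C ∈ comps G S) : C.Nonempty := by
  obtain ⟨c, rfl⟩ := hC
  exact c.nonempty_supp.image _

theorem exists_mem_comps (hx : x ∈ S) : ∃ C ∈ comps G S, x ∈ C :=
  ⟨_, ⟨(G.induce S).connectedComponentMk ⟨x, hx⟩, rfl⟩, ⟨x, hx⟩, rfl, rfl⟩

theorem mem_comps_iff_reachable (hC : C ∈ comps G S) (hxC : x ∈ C) {y : V} :
    y ∈ C ↔ ∃ hy : y ∈ S, (G.induce S).Reachable ⟨x, subset_of_mem_comps hC hxC⟩ ⟨y, hy⟩ := by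
  obtain ⟨c, rfl⟩ := hC
  obtain ⟨x', hx', rfl⟩ := hxC
  constructor
  · rintro ⟨y', hy', rfl⟩
    exact ⟨y'.2, ConnectedComponent.exact (hx'.trans hy'.symm)⟩
  · rintro ⟨hy, hr⟩
    exact ⟨⟨y, hy⟩, (ConnectedComponent.sound hr).symm.trans hx', rfl⟩

theorem mem_of_adj_of_mem_comps (hC : C ∈ comps G S) (hu : u ∈ C) (hv : v ∈ S)
    (hadj : G.Adj u v) : v ∈ C := by
  obtain ⟨hu', hr⟩ := (mem_comps_iff_reachable hC hu).1 hu
  exact (mem_comps_iff_reachable hC hu).2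
    ⟨hv, hr.trans (Adj.reachable (show (G.induce S).Adj ⟨u, hu'⟩ ⟨v, hv⟩ from hadj))⟩

theorem eq_of_mem_comps (hC : C ∈ comps G S) (hD : D ∈ comps G S) (hxC : x ∈ C)
    (hxD : x ∈ D) : C = D := by
  ext y
  rw [mem_comps_iff_reachable hC hxC, mem_comps_iff_reachable hD hxD]

theorem subset_of_mem_comps_of_subset (hTS : T ⊆ S) (hD : D ∈ comps G T) (hC : C ∈ comps G S)
    (hxD : x ∈ D) (hxC : x ∈ C) : D ⊆ C := by
  intro y hy
  obtain ⟨hyT, hr⟩ := (mem_comps_iff_reachable hD hxD).1 hy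
  exact (mem_comps_iff_reachable hC hxC).2 ⟨hTS hyT, hr.map (induceHomOfLE G hTS).toHom⟩

theorem mem_comps_of_adj_closed (hTS : T ⊆ S) (hC : C ∈ comps G T)
    (hclosed : ∀ u ∈ C, ∀ w ∈ S, G.Adj u w → w ∈ C) : C ∈ comps G S := by
  obtain ⟨x, hxC⟩ := nonempty_of_mem_comps hC
  obtain ⟨D, hD, hxD⟩ := exists_mem_comps (G := G) (hTS (subset_of_mem_comps hC hxC))
  suffices C = D from this ▸ hD
  refine (subset_of_mem_comps_of_subset hTS hC hD hxC hxD).antisymm fun y hy => ?_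
  obtain ⟨_, hr⟩ := (mem_comps_iff_reachable hD hxD).1 hy
  exact hr.mem_of_adj_closed (P := {z : S | z.1 ∈ C})
    (fun a b hab ha => hclosed a ha b b.2 hab) hxC

theorem mem_comps_of_subset (hTS : T ⊆ S) (hC : C ∈ comps G S) (hCT : C ⊆ T) :
    C ∈ comps G T := by
  obtain ⟨x, hxC⟩ := nonempty_of_mem_comps hC
  obtain ⟨D, hD, hxD⟩ := exists_mem_comps (G := G) (hCT hxC)
  have hDC := subset_of_mem_comps_of_subset hTS hD hC hxD hxC
  have hDS : D ∈ comps G S := mem_comps_of_adj_closed hTS hD fun u hu w hw hadj =>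
    mem_of_adj_of_mem_comps hD hu (hCT (mem_of_adj_of_mem_comps hC (hDC hu) hw hadj)) hadj
  exact eq_of_mem_comps hDS hC hxD hxC ▸ hD

theorem badVtx_diff_singleton_iff (h : ¬G.Adj u v) :
    badVtx G (S \ {v}) u ↔ badVtx G S u := by
  have hv : v ∉ G.neighborSet u := h
  rw [badVtx, badVtx, ← inter_sdiff_assoc, sdiff_singleton_eq_self (fun hv' => hv hv'.1),
    sdiff_sdiff_right, inter_singleton_eq_empty.2 hv, union_empty]

theorem not_badVtx_diff_singleton [G.LocallyFinite] (hadj : G.Adj u v) (hvS : v ∈ S)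
    (h : badVtx G S u) : ¬badVtx G (S \ {v}) u := by
  have hv : v ∈ G.neighborSet u := hadj
  have hin := ncard_sdiff_singleton_add_one (show v ∈ G.neighborSet u ∩ S from ⟨hv, hvS⟩)
  have hout := ncard_insert_of_notMem (fun h' => h'.2 hvS : v ∉ G.neighborSet u \ S)
  rw [badVtx] at h ⊢
  rw [← inter_sdiff_assoc, sdiff_sdiff_right, inter_eq_right.2 (singleton_subset_iff.2 hv),
    union_singleton]
  omega

theorem badComps_diff_singleton [G.LocallyFinite] {V' : Set V} (hV' : V' ∈ badComps G S)
    (hv : v ∈ V') : badComps G (S \ {v}) = badComps G S \ {V'} := by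
  have hvS : v ∈ S := subset_of_mem_comps hV'.1 hv
  have hnbr : ∀ u ∈ S, G.Adj u v → u ∈ V' := fun u hu hadj =>
    mem_of_adj_of_mem_comps hV'.1 hv hu hadj.symm
  ext C
  constructor
  · rintro ⟨hC, hbad⟩
    have hCS := subset_of_mem_comps hC
    have hnadj : ∀ u ∈ C, ¬G.Adj u v := fun u hu hadj =>
      not_badVtx_diff_singleton hadj hvS (hV'.2 u (hnbr u (hCS hu).1 hadj)) (hbad u hu)
    refine ⟨⟨mem_comps_of_adj_closed sdiff_subset hC ?_, fun u hu =>
      (badVtx_diff_singleton_iff (hnadj u hu)).1 (hbad u hu)⟩, ?_⟩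
    · intro u hu w hw hadj
      exact mem_of_adj_of_mem_comps hC hu ⟨hw, by rintro rfl; exact hnadj u hu hadj⟩ hadj
    · rintro rfl
      exact (hCS hv).2 rfl
  · rintro ⟨⟨hC, hbad⟩, hne⟩
    have hCS := subset_of_mem_comps hC
    have hnadj : ∀ u ∈ C, ¬G.Adj u v := fun u hu hadj =>
      hne (eq_of_mem_comps hC hV'.1 hu (hnbr u (hCS hu) hadj))
    have hCT : C ⊆ S \ {v} := fun u hu =>
      ⟨hCS hu, by rintro rfl; exact hne (eq_of_mem_comps hC hV'.1 hu hv)⟩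
    exact ⟨mem_comps_of_subset sdiff_subset hC hCT, fun u hu =>
      (badVtx_diff_singleton_iff (hnadj u hu)).2 (hbad u hu)⟩

end

theorem stmt10_general {V : Type*} [Fintype V] (G : SimpleGraph V)
    (S : Set V)
    (V' : Set V) (hV' : V' ∈ badComps G S) (v : V) (hv : v ∈ V') (vs : V) :
    (∑ᶠ C ∈ badComps G (S \ {v}), (dSet G vs C : ℤ))
      ≤ (∑ᶠ C ∈ badComps G S, (dSet G vs C : ℤ)) - (dSet G vs V' : ℤ) := by
  classical
  rw [badComps_diff_singleton hV' hv, ← insert_eq_of_mem hV', ← insert_sdiff_singleton,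
    finsum_mem_insert _ (fun h => h.2 rfl) (toFinite _), insert_sdiff_singleton,
    insert_eq_of_mem hV', add_sub_cancel_left]

/-- Corollary: removing a vertex of a bad component `G'(V',E') ∈ B(S)` from
`S` decreases the sum of distances to bad components of the `S`-side by at
least `d(v*, V')`. -/
theorem stmt10 {V : Type*} [Fintype V] (G : SimpleGraph V) (hconn : G.Connected)
    (S : Set V) (hproper : properCut G S)
    (V' : Set V) (hV' : V' ∈ badComps G S) (v : V) (hv : v ∈ V') (vs : V) :
    (∑ᶠ C ∈ badComps G (S \ {v}), (dSet G vs C : ℤ))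
      ≤ (∑ᶠ C ∈ badComps G S, (dSet G vs C : ℤ)) - (dSet G vs V' : ℤ) :=
  stmt10_general G S V' hV' v hv vs
end

section
/- Let G(V,E) be a finite simple undirected graph and let 𝒢(𝒱,ℰ) be the graph constructed from G as described. Then every vertex of 𝒢 has odd degree. Specifically: deg_𝒢(v) = 2·deg_G(v)+1 for each v ∈ V; deg_𝒢(w_v) = 2·deg_G(v)+1 for each v ∈ V; each vertex of 𝒳 and each of g_1, g_2 has degree 1; each vertex of 𝒴 has degree 3; and deg_𝒢(z_1) = deg_𝒢(z_2) = 2·|E| + 1. -/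
/-- The degree `deg_G(v)` of `v` in `G`, as the cardinality of its
neighborhood. -/
noncomputable def deg {V : Type*} (G : SimpleGraph V) (v : V) : ℕ :=
  (G.neighborSet v).ncard

/-- `u ∈ N*_G(v) = N_G(v) ∪ {v}`. -/
def closedNbr {V : Type*} (G : SimpleGraph V) (v u : V) : Prop :=
  G.Adj v u ∨ u = v

/-- The vertex set `𝒱 = V ∪ 𝒲 ∪ 𝒳 ∪ 𝒴 ∪ {z₁,z₂} ∪ {g₁,g₂}` of the graph
`𝒢` constructed from `G`: for each `v ∈ V` there are fresh vertices `w v`,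
`x v i` for `i < deg_G(v)` (the set `𝒳_v`) and `y v i` for `i < deg_G(v)`
(the set `𝒴_v`), plus four further fresh vertices `z₁, z₂, g₁, g₂`. -/
inductive CalV {V : Type*} (G : SimpleGraph V) where
  | orig (v : V)
  | w (v : V)
  | x (v : V) (i : Fin (deg G v))
  | y (v : V) (i : Fin (deg G v))
  | z1
  | z2
  | g1
  | g2

/-- The edges `ℰ` of `𝒢`, as a base relation: `(v, x)` for `x ∈ 𝒳_v`;
`(w_v, u)` for `u ∈ N*_G(v)`; `(w_v, y)` for `y ∈ 𝒴_v`; `(y, z₁)` and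
`(y, z₂)` for `y ∈ 𝒴`; `(z₁, g₁)`; `(z₂, g₂)`. -/
inductive CalRel {V : Type*} (G : SimpleGraph V) : CalV G → CalV G → Prop where
  | vx (v : V) (i : Fin (deg G v)) : CalRel G (.orig v) (.x v i)
  | wu (v u : V) (h : closedNbr G v u) : CalRel G (.w v) (.orig u)
  | wy (v : V) (i : Fin (deg G v)) : CalRel G (.w v) (.y v i)
  | yz1 (v : V) (i : Fin (deg G v)) : CalRel G (.y v i) .z1
  | yz2 (v : V) (i : Fin (deg G v)) : CalRel G (.y v i) .z2
  | zg1 : CalRel G .z1 .g1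
  | zg2 : CalRel G .z2 .g2

/-- The graph `𝒢(𝒱, ℰ)` constructed from `G`. -/
noncomputable def CalG {V : Type*} (G : SimpleGraph V) : SimpleGraph (CalV G) :=
  SimpleGraph.fromRel (CalRel G)

/-- `strictClosure H S` is `c(S, H, φ^strict)`: the least superset of `S`
closed under the strict-majority coloring rule, by which a vertex is colored
white whenever more than half of its neighbors are white. -/
def strictClosure {W : Type*} (H : SimpleGraph W) (S : Set W) : Set W :=
  ⋂₀ {T : Set W | S ⊆ T ∧
    ∀ v, (H.neighborSet v).ncard < 2 * (H.neighborSet v ∩ T).ncard → v ∈ T}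

/-!
Every neighbourhood in `𝒢` is read off the list of edges and is a disjoint union of
injective images: `N(v) = w(N*(v)) ∪ 𝒳_v`, `N(w_v) = N*(v) ∪ 𝒴_v`, `N(z_i) = {g_i} ∪ 𝒴`,
while `x`, `y` and `g_i` have neighbourhoods `{v}`, `{w_v, z₁, z₂}` and `{z_i}`.
Since `|N*(v)| = deg v + 1` and, by the handshake lemma, `|𝒴| = ∑ deg v = 2|E|`,
every degree is odd.
-/
open Function Set

theorem Set.ncard_image_union_range {α β γ : Type*} [Finite β] {f : α → γ} {g : β → γ}
    {s : Set α} (hs : s.Finite) (hf : Injective f) (hg : Injective g)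
    (hfg : ∀ a b, f a ≠ g b) : (f '' s ∪ range g).ncard = s.ncard + Nat.card β := by
  have hdisj : Disjoint (f '' s) (range g) := by
    rw [disjoint_left]
    rintro _ ⟨a, -, rfl⟩ ⟨b, hb⟩
    exact hfg a b hb.symm
  rw [ncard_union_eq hdisj (hs.image f), ncard_image_of_injective s hf,
    ncard_range_of_injective hg]

section

variable {V : Type*} (G : SimpleGraph V)

theorem closedNbr_comm {u v : V} : closedNbr G u v ↔ closedNbr G v u := by
  simp only [closedNbr, G.adj_comm u v, eq_comm]

theorem setOf_closedNbr (v : V) : {u | closedNbr G v u} = insert v (G.neighborSet v) := by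
  ext u
  simp only [closedNbr, mem_ofPred_eq, mem_insert_iff, SimpleGraph.mem_neighborSet, or_comm]

theorem ncard_setOf_closedNbr {v : V} (hv : (G.neighborSet v).Finite) :
    {u | closedNbr G v u}.ncard = deg G v + 1 := by
  rw [setOf_closedNbr, ncard_insert_of_notMem G.notMem_neighborSet_self hv, deg]

theorem card_sigma_fin_deg [Finite V] :
    Nat.card (Σ v, Fin (deg G v)) = 2 * G.edgeSet.ncard := by
  classical
  have := Fintype.ofFinite V
  have hdeg : ∀ v, deg G v = G.degree v := fun v => by
    rw [deg, ← Nat.card_coe_set_eq, Nat.card_eq_fintype_card, G.card_neighborSet_eq_degree]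
  rw [Nat.card_eq_fintype_card, Fintype.card_sigma]
  simp only [Fintype.card_fin, hdeg]
  rw [G.sum_degrees_eq_twice_card_edges, ← G.coe_edgeFinset, ncard_coe_finset]

namespace CalG

theorem calRel_irrefl (a : CalV G) : ¬ CalRel G a a := by
  intro h; cases h

theorem adj_iff {a b : CalV G} : (CalG G).Adj a b ↔ CalRel G a b ∨ CalRel G b a := by
  rw [CalG, SimpleGraph.fromRel_adj, and_iff_right_iff_imp]
  rintro (h | h) rfl <;> exact calRel_irrefl G _ h

theorem neighborSet_orig (v : V) : (CalG G).neighborSet (.orig v) =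
    CalV.w '' {u | closedNbr G v u} ∪ range (CalV.x v) := by
  ext b
  simp only [SimpleGraph.mem_neighborSet, adj_iff, mem_union, mem_image, mem_range, mem_ofPred_eq]
  constructor
  · rintro (h | h) <;> cases h
    · exact .inr ⟨_, rfl⟩
    · exact .inl ⟨_, (closedNbr_comm G).1 ‹_›, rfl⟩
  · rintro (⟨u, hu, rfl⟩ | ⟨i, rfl⟩)
    · exact .inr (.wu u v ((closedNbr_comm G).1 hu))
    · exact .inl (.vx v i)

theorem neighborSet_w (v : V) : (CalG G).neighborSet (.w v) =
    CalV.orig '' {u | closedNbr G v u} ∪ range (CalV.y v) := by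
  ext b
  simp only [SimpleGraph.mem_neighborSet, adj_iff, mem_union, mem_image, mem_range, mem_ofPred_eq]
  constructor
  · rintro (h | h) <;> cases h
    · exact .inl ⟨_, ‹_›, rfl⟩
    · exact .inr ⟨_, rfl⟩
  · rintro (⟨u, hu, rfl⟩ | ⟨i, rfl⟩)
    · exact .inl (.wu v u hu)
    · exact .inl (.wy v i)

theorem neighborSet_x (v : V) (i : Fin (deg G v)) :
    (CalG G).neighborSet (.x v i) = {.orig v} := by
  ext b
  simp only [SimpleGraph.mem_neighborSet, adj_iff, mem_singleton_iff]
  constructor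
  · rintro (h | h) <;> cases h
    rfl
  · rintro rfl
    exact .inr (.vx v i)

theorem neighborSet_y (v : V) (i : Fin (deg G v)) :
    (CalG G).neighborSet (.y v i) = {.w v, .z1, .z2} := by
  ext b
  simp only [SimpleGraph.mem_neighborSet, adj_iff, mem_insert_iff, mem_singleton_iff]
  constructor
  · rintro (h | h) <;> cases h <;> simp
  · rintro (rfl | rfl | rfl)
    · exact .inr (.wy v i)
    · exact .inl (.yz1 v i)
    · exact .inl (.yz2 v i)

theorem neighborSet_z1 : (CalG G).neighborSet .z1 =
    insert .g1 (range fun p : Σ v, Fin (deg G v) => CalV.y p.1 p.2) := by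
  ext b
  simp only [SimpleGraph.mem_neighborSet, adj_iff, mem_insert_iff, mem_range]
  constructor
  · rintro (h | h) <;> cases h
    · exact .inl rfl
    · exact .inr ⟨⟨_, _⟩, rfl⟩
  · rintro (rfl | ⟨⟨v, i⟩, rfl⟩)
    · exact .inl .zg1
    · exact .inr (.yz1 v i)

theorem neighborSet_z2 : (CalG G).neighborSet .z2 =
    insert .g2 (range fun p : Σ v, Fin (deg G v) => CalV.y p.1 p.2) := by
  ext b
  simp only [SimpleGraph.mem_neighborSet, adj_iff, mem_insert_iff, mem_range]
  constructor
  · rintro (h | h) <;> cases h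
    · exact .inl rfl
    · exact .inr ⟨⟨_, _⟩, rfl⟩
  · rintro (rfl | ⟨⟨v, i⟩, rfl⟩)
    · exact .inl .zg2
    · exact .inr (.yz2 v i)

theorem neighborSet_g1 : (CalG G).neighborSet .g1 = {.z1} := by
  ext b
  simp only [SimpleGraph.mem_neighborSet, adj_iff, mem_singleton_iff]
  constructor
  · rintro (h | h) <;> cases h
    rfl
  · rintro rfl
    exact .inr .zg1

theorem neighborSet_g2 : (CalG G).neighborSet .g2 = {.z2} := by
  ext b
  simp only [SimpleGraph.mem_neighborSet, adj_iff, mem_singleton_iff]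
  constructor
  · rintro (h | h) <;> cases h
    rfl
  · rintro rfl
    exact .inr .zg2

theorem y_sigma_injective :
    Injective fun p : Σ v, Fin (deg G v) => (CalV.y p.1 p.2 : CalV G) := by
  rintro ⟨v, i⟩ ⟨u, j⟩ h
  cases h
  rfl

theorem ncard_neighborSet_orig {v : V} (hv : (G.neighborSet v).Finite) :
    ((CalG G).neighborSet (.orig v)).ncard = 2 * deg G v + 1 := by
  rw [neighborSet_orig, ncard_image_union_range (setOf_closedNbr G v ▸ hv.insert v)
    (fun _ _ h => by cases h; rfl) (fun _ _ h => by cases h; rfl) (fun _ _ h => by cases h),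
    ncard_setOf_closedNbr G hv, Nat.card_fin]
  ring

theorem ncard_neighborSet_w {v : V} (hv : (G.neighborSet v).Finite) :
    ((CalG G).neighborSet (.w v)).ncard = 2 * deg G v + 1 := by
  rw [neighborSet_w, ncard_image_union_range (setOf_closedNbr G v ▸ hv.insert v)
    (fun _ _ h => by cases h; rfl) (fun _ _ h => by cases h; rfl) (fun _ _ h => by cases h),
    ncard_setOf_closedNbr G hv, Nat.card_fin]
  ring

theorem ncard_neighborSet_x (v : V) (i : Fin (deg G v)) :
    ((CalG G).neighborSet (.x v i)).ncard = 1 := by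
  rw [neighborSet_x, ncard_singleton]

theorem ncard_neighborSet_y (v : V) (i : Fin (deg G v)) :
    ((CalG G).neighborSet (.y v i)).ncard = 3 := by
  rw [neighborSet_y, ncard_insert_of_notMem (by simp), ncard_pair (by simp)]

theorem ncard_neighborSet_z1 [Finite V] :
    ((CalG G).neighborSet .z1).ncard = 2 * G.edgeSet.ncard + 1 := by
  rw [neighborSet_z1, ncard_insert_of_notMem (by simp), ncard_range_of_injective
    (y_sigma_injective G), card_sigma_fin_deg]

theorem ncard_neighborSet_z2 [Finite V] :
    ((CalG G).neighborSet .z2).ncard = 2 * G.edgeSet.ncard + 1 := by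
  rw [neighborSet_z2, ncard_insert_of_notMem (by simp), ncard_range_of_injective
    (y_sigma_injective G), card_sigma_fin_deg]

theorem ncard_neighborSet_g1 : ((CalG G).neighborSet .g1).ncard = 1 := by
  rw [neighborSet_g1, ncard_singleton]

theorem ncard_neighborSet_g2 : ((CalG G).neighborSet .g2).ncard = 1 := by
  rw [neighborSet_g2, ncard_singleton]

end CalG

end

/-- Every vertex of `𝒢` has odd degree; specifically,
`deg_𝒢(v) = deg_𝒢(w_v) = 2·deg_G(v) + 1` for `v ∈ V`, the vertices of `𝒳`
and `g₁, g₂` have degree `1`, the vertices of `𝒴` have degree `3`, and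
`deg_𝒢(z₁) = deg_𝒢(z₂) = 2·|E| + 1`. -/
theorem stmt19 {V : Type*} [Fintype V] (G : SimpleGraph V) :
    (∀ a : CalV G, Odd (((CalG G).neighborSet a).ncard)) ∧
    (∀ v : V, ((CalG G).neighborSet (CalV.orig v)).ncard = 2 * deg G v + 1) ∧
    (∀ v : V, ((CalG G).neighborSet (CalV.w v)).ncard = 2 * deg G v + 1) ∧
    (∀ (v : V) (i : Fin (deg G v)),
      ((CalG G).neighborSet (CalV.x v i)).ncard = 1) ∧
    (((CalG G).neighborSet CalV.g1).ncard = 1) ∧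
    (((CalG G).neighborSet CalV.g2).ncard = 1) ∧
    (∀ (v : V) (i : Fin (deg G v)),
      ((CalG G).neighborSet (CalV.y v i)).ncard = 3) ∧
    (((CalG G).neighborSet CalV.z1).ncard = 2 * G.edgeSet.ncard + 1) ∧
    (((CalG G).neighborSet CalV.z2).ncard = 2 * G.edgeSet.ncard + 1) := by
  have hfin (v : V) : (G.neighborSet v).Finite := toFinite _
  have horig (v : V) := CalG.ncard_neighborSet_orig G (hfin v)
  have hw (v : V) := CalG.ncard_neighborSet_w G (hfin v)
  have hx := CalG.ncard_neighborSet_x G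
  have hy := CalG.ncard_neighborSet_y G
  have hz1 := CalG.ncard_neighborSet_z1 G
  have hz2 := CalG.ncard_neighborSet_z2 G
  have hg1 := CalG.ncard_neighborSet_g1 G
  have hg2 := CalG.ncard_neighborSet_g2 G
  refine ⟨?_, horig, hw, hx, hg1, hg2, hy, hz1, hz2⟩
  rintro (v | v | ⟨v, i⟩ | ⟨v, i⟩ | _ | _ | _ | _) <;>
    simp only [horig, hw, hx, hy, hz1, hz2, hg1, hg2, odd_two_mul_add_one, odd_one]
  decide
end
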